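/- arXiv:gr-qc/0604112 — 4 statements merged into one kernel-verified Lean document; each statement's English description precedes it below -/
import Mathlib

section
/- Let ν₁ and ν₂ be Borel measures on ℝ such that for every n ∈ ℕ the function x ↦ xⁿ is integrable with respect to both measures and ∫ xⁿ dν₁ = ∫ xⁿ dν₂. Assume that the subspace of (classes of) polynomial functions is dense in L²(ν₁), and that the densely defined symmetric operator T in L²(ν₁), with domain the polynomial functions and given by (T p)(x) = x·p(x), is essentially self-adjoint (its closure equals its adjoint). Then ν₁ = ν₂. -/
/-!
For polynomials, `⟪p, q⟫` in `L²(ν)` is a linear combination of moments, so `p ↦ p` is an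
isometry between the polynomial classes in `L²(ν₁)` and in `L²(ν₂)`. Essential self-adjointness
makes the range of `T - z`, i.e. `(x - z) ℂ[X]`, dense in `L²(ν₁)` for `z ∉ ℝ`. Hence, if one
polynomial sequence converges to `F` in both `L²(ν₁)` and `L²(ν₂)`, so does one for
`F / (x - z)`: approximate `F` by `(x - z) q_k` in `L²(ν₁)`, carry this over to `L²(ν₂)` through
the isometry, and divide by `x - z`, which is bounded by `|im z|⁻¹` on the real line. Starting
from `1`, every `(x - i)⁻ᵐ (x + i)⁻ⁿ` is such a common limit, so its integrals `⟪1, F⟫` against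
`ν₁` and `ν₂` agree; these functions span a point-separating star algebra of bounded continuous
functions, which determines finite measures.
-/

open MeasureTheory Polynomial Filter Topology ComplexConjugate

namespace LinearPMap

lemma graph_closure_le_closure_graph {R E F : Type*} [CommRing R] [AddCommGroup E]
    [AddCommGroup F] [Module R E] [Module R F] [TopologicalSpace E] [TopologicalSpace F]
    [ContinuousAdd E] [ContinuousAdd F] [TopologicalSpace R] [ContinuousSMul R E]
    [ContinuousSMul R F] (T : E →ₗ.[R] F) :
    T.closure.graph ≤ T.graph.topologicalClosure := by
  by_cases hT : T.IsClosable
  · exact hT.graph_closure_eq_closure_graph.ge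
  · rw [closure_def' hT]
    exact T.graph.le_topologicalClosure

variable {E : Type*} [NormedAddCommGroup E] [InnerProductSpace ℂ E] {T : E →ₗ.[ℂ] E}

lemma inner_snd_fst_of_mem_closure_graph (hT : T.IsFormalAdjoint T) {x : E × E}
    (hx : x ∈ T.graph.topologicalClosure) : inner ℂ x.2 x.1 = inner ℂ x.1 x.2 := by
  have hgraph : (T.graph : Set (E × E)) ⊆ {x | inner ℂ x.2 x.1 = inner ℂ x.1 x.2} := by
    rintro ⟨a, b⟩ hab
    obtain ⟨y, rfl, rfl⟩ := T.mem_graph_iff.mp hab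
    exact hT y y
  exact closure_minimal hgraph (isClosed_eq (by fun_prop) (by fun_prop)) hx

variable [CompleteSpace E]

lemma mem_graph_adjoint_of_mem_orthogonal_range (hT : Dense (T.domain : Set E)) {z : ℂ} {y : E}
    (hy : y ∈ (LinearMap.range (T.toFun - z • T.domain.subtype))ᗮ) :
    (y, conj z • y) ∈ T†.graph := by
  have hadj (x : T.domain) : inner ℂ (conj z • y) (x : E) = inner ℂ y (T x) := by
    have h := (Submodule.mem_orthogonal' _ y).mp hy _ ⟨x, rfl⟩
    rw [LinearMap.sub_apply, LinearMap.smul_apply, inner_sub_right, sub_eq_zero, toFun_eq_coe] at h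
    rw [inner_smul_left, Complex.conj_conj, h, Submodule.subtype_apply, inner_smul_right]
  have hdom : y ∈ T†.domain := T.mem_adjoint_domain_of_exists y ⟨_, hadj⟩
  exact T†.mem_graph_iff.mpr ⟨⟨y, hdom⟩, rfl, adjoint_apply_eq hT ⟨y, hdom⟩ hadj⟩

lemma dense_range_sub_smul (hT : Dense (T.domain : Set E))
    (hsymm : T.IsFormalAdjoint T) (hesa : T.closure = T†) {z : ℂ} (hz : z.im ≠ 0) :
    Dense (LinearMap.range (T.toFun - z • T.domain.subtype) : Set E) := by
  rw [Submodule.dense_iff_topologicalClosure_eq_top, Submodule.topologicalClosure_eq_top_iff,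
    Submodule.eq_bot_iff]
  intro y hy
  -- `(y, conj z • y)` lies in the closure of the graph, so symmetry gives `z ‖y‖² = conj z ‖y‖²`.
  have hgraph := mem_graph_adjoint_of_mem_orthogonal_range hT hy
  rw [← hesa] at hgraph
  have hsymm_y := inner_snd_fst_of_mem_closure_graph hsymm
    (T.graph_closure_le_closure_graph hgraph)
  rw [inner_smul_left, inner_smul_right, Complex.conj_conj] at hsymm_y
  by_contra hy0
  exact hz (Complex.conj_eq_iff_im.mp (mul_right_cancel₀ (inner_self_ne_zero.mpr hy0) hsymm_y).symm)

end LinearPMap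

lemma Complex.norm_inv_ofReal_sub_le {z : ℂ} (hz : z.im ≠ 0) (x : ℝ) :
    ‖((x : ℂ) - z)⁻¹‖ ≤ |z.im|⁻¹ := by
  rw [norm_inv]
  refine inv_anti₀ (abs_pos.mpr hz) ?_
  simpa using Complex.abs_im_le_norm ((x : ℂ) - z)

namespace BoundedContinuousFunction

open Complex

noncomputable def invOfRealSubI : ℝ →ᵇ ℂ :=
  ofNormedAddCommGroup (fun x : ℝ => ((x : ℂ) - I)⁻¹)
    ((continuous_ofReal.sub continuous_const).inv₀ fun x h => by
      simpa using congrArg Complex.im h) 1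
    fun x => by simpa using norm_inv_ofReal_sub_le (z := I) (by simp) x

lemma invOfRealSubI_apply (x : ℝ) : invOfRealSubI x = ((x : ℂ) - I)⁻¹ := rfl

lemma star_invOfRealSubI_apply (x : ℝ) : star invOfRealSubI x = ((x : ℂ) - -I)⁻¹ := by
  rw [star_apply, invOfRealSubI_apply, RCLike.star_def, map_inv₀, map_sub, conj_ofReal, conj_I]

lemma injective_invOfRealSubI : Function.Injective invOfRealSubI := fun x y h => by
  simpa [invOfRealSubI_apply] using h

-- The products `(x - i)⁻ᵐ (x + i)⁻ⁿ` span the star algebra generated by the injective `(x - i)⁻¹`.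
lemma _root_.MeasureTheory.Measure.ext_of_integral_invOfRealSubI_pow_mul_eq
    {ν₁ ν₂ : Measure ℝ} [IsFiniteMeasure ν₁] [IsFiniteMeasure ν₂]
    (h : ∀ m n : ℕ, ∫ x, (invOfRealSubI ^ m * star invOfRealSubI ^ n) x ∂ν₁ =
      ∫ x, (invOfRealSubI ^ m * star invOfRealSubI ^ n) x ∂ν₂) : ν₁ = ν₂ := by
  refine ext_of_forall_mem_subalgebra_integral_eq_of_polish
    (A := StarAlgebra.adjoin ℂ {invOfRealSubI}) ?_ fun g hg => ?_
  · intro x y hxy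
    exact ⟨_, ⟨_, ⟨invOfRealSubI, StarAlgebra.subset_adjoin ℂ _ rfl, rfl⟩, rfl⟩,
      injective_invOfRealSubI.ne hxy⟩
  · replace hg : g ∈ Subalgebra.toSubmodule (StarAlgebra.adjoin ℂ {invOfRealSubI}).toSubalgebra :=
      hg
    rw [StarAlgebra.adjoin_toSubalgebra, Set.star_singleton, Set.singleton_union,
      Algebra.adjoin_eq_span] at hg
    induction hg using Submodule.span_induction with
    | mem g hg =>
      obtain ⟨m, n, rfl⟩ := (Submonoid.mem_closure_pair _ _ _).mp hg
      exact h m n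
    | zero => simp
    | add f g _ _ hf hg =>
      simp only [coe_add, Pi.add_apply]
      rw [integral_add (f.integrable ν₁) (g.integrable ν₁),
        integral_add (f.integrable ν₂) (g.integrable ν₂), hf, hg]
    | smul c f _ hf =>
      simp only [coe_smul, integral_smul, hf]

end BoundedContinuousFunction

namespace Polynomial

lemma conj_eval_ofReal (p : ℂ[X]) (x : ℝ) :
    conj (p.eval (x : ℂ)) = (p.map (starRingEnd ℂ)).eval (x : ℂ) := by
  rw [eval_map, ← eval₂_at_apply, Complex.conj_ofReal]

lemma memLp_inv_ofReal_sub_mul {ν : Measure ℝ} {z : ℂ} {F : ℝ → ℂ} (hF : MemLp F 2 ν)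
    (hz : z.im ≠ 0) :
    MemLp (fun x : ℝ => ((x : ℂ) - z)⁻¹ * F x) 2 ν :=
  hF.of_le_mul (((Complex.measurable_ofReal.sub_const z).inv).aestronglyMeasurable.mul hF.1)
    (.of_forall fun x => by
      rw [norm_mul]
      exact mul_le_mul_of_nonneg_right (Complex.norm_inv_ofReal_sub_le hz x) (norm_nonneg _))

section Moments

variable {ν : Measure ℝ} (hmom : ∀ n : ℕ, Integrable (fun x : ℝ => x ^ n) ν)
include hmom

lemma integrable_ofReal_pow (n : ℕ) : Integrable (fun x : ℝ => (x : ℂ) ^ n) ν := by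
  simpa using (hmom n).ofReal (𝕜 := ℂ)

lemma integrable_eval_ofReal (p : ℂ[X]) : Integrable (fun x : ℝ => p.eval (x : ℂ)) ν := by
  simp_rw [eval_eq_sum_range]
  exact integrable_finsetSum _ fun n _ => (integrable_ofReal_pow hmom n).const_mul _

lemma memLp_two_eval_ofReal (p : ℂ[X]) : MemLp (fun x : ℝ => p.eval (x : ℂ)) 2 ν := by
  have hcont : Continuous fun x : ℝ => p.eval (x : ℂ) :=
    p.continuous.comp Complex.continuous_ofReal
  rw [memLp_two_iff_integrable_sq_norm hcont.aestronglyMeasurable]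
  refine (integrable_eval_ofReal hmom (p.map (starRingEnd ℂ) * p)).re.congr
    (.of_forall fun x => ?_)
  simp only [eval_mul, ← conj_eval_ofReal, ← Complex.normSq_eq_conj_mul_self, RCLike.re_to_complex,
    Complex.ofReal_re, Complex.sq_norm]

noncomputable def toLp : ℂ[X] →ₗ[ℂ] Lp ℂ 2 ν where
  toFun p := (memLp_two_eval_ofReal hmom p).toLp _
  map_add' p q := by
    simp_rw [eval_add]
    exact MemLp.toLp_add _ _
  map_smul' c p := by
    simp_rw [eval_smul]
    exact MemLp.toLp_const_smul c (memLp_two_eval_ofReal hmom p)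

lemma coeFn_toLp (p : ℂ[X]) : toLp hmom p =ᵐ[ν] fun x : ℝ => p.eval (x : ℂ) :=
  MemLp.coeFn_toLp (memLp_two_eval_ofReal hmom p)

lemma inner_toLp_left (p : ℂ[X]) (f : Lp ℂ 2 ν) :
    inner ℂ (toLp hmom p) f = ∫ x, conj (p.eval (x : ℂ)) * f x ∂ν := by
  rw [L2.inner_def]
  refine integral_congr_ae ?_
  filter_upwards [coeFn_toLp hmom p] with x hx
  rw [RCLike.inner_apply, hx, mul_comm]

lemma inner_toLp_toLp (p q : ℂ[X]) :
    inner ℂ (toLp hmom p) (toLp hmom q) = ∫ x, (p.map (starRingEnd ℂ) * q).eval (x : ℂ) ∂ν := by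
  rw [inner_toLp_left]
  refine integral_congr_ae ?_
  filter_upwards [coeFn_toLp hmom q] with x hx
  rw [hx, eval_mul, conj_eval_ofReal]

lemma range_sub_smul_subset_range_toLp {T : Lp ℂ 2 ν →ₗ.[ℂ] Lp ℂ 2 ν}
    (hdom : ∀ g : T.domain, ∃ p : ℂ[X], (g : ℝ → ℂ) =ᵐ[ν] fun x : ℝ => p.eval (x : ℂ))
    (haction : ∀ (g : T.domain) (p : ℂ[X]),
      ((g : Lp ℂ 2 ν) : ℝ → ℂ) =ᵐ[ν] (fun x : ℝ => p.eval (x : ℂ)) →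
      (T g : ℝ → ℂ) =ᵐ[ν] fun x : ℝ => (x : ℂ) * p.eval (x : ℂ)) (z : ℂ) :
    (LinearMap.range (T.toFun - z • T.domain.subtype) : Set (Lp ℂ 2 ν)) ⊆
      Set.range fun q : ℂ[X] => toLp hmom ((X - C z) * q) := by
  rintro _ ⟨g, rfl⟩
  obtain ⟨p, hp⟩ := hdom g
  refine ⟨p, Lp.ext ?_⟩
  filter_upwards [coeFn_toLp hmom ((X - C z) * p), haction g p hp, hp,
    Lp.coeFn_sub (T g) (z • (g : Lp ℂ 2 ν)), Lp.coeFn_smul z (g : Lp ℂ 2 ν)]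
    with x h₁ h₂ h₃ h₄ h₅
  simp only [LinearMap.sub_apply, LinearMap.smul_apply, LinearPMap.toFun_eq_coe,
    Submodule.subtype_apply, h₁, h₄, Pi.sub_apply, h₂, h₅, Pi.smul_apply, h₃, eval_mul,
    eval_sub, eval_X, eval_C, smul_eq_mul]
  ring

-- Division by `x - z` has norm at most `|im z|⁻¹` on `L²(ν)`.
lemma tendsto_toLp_of_tendsto_toLp_mul {z : ℂ} {F : ℝ → ℂ} (hF : MemLp F 2 ν) (hz : z.im ≠ 0)
    {q : ℕ → ℂ[X]}
    (hq : Tendsto (fun k => toLp hmom ((X - C z) * q k)) atTop (𝓝 (hF.toLp F))) :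
    Tendsto (fun k => toLp hmom (q k)) atTop
      (𝓝 ((memLp_inv_ofReal_sub_mul hF hz).toLp _)) := by
  rw [tendsto_iff_norm_sub_tendsto_zero] at hq ⊢
  refine squeeze_zero (fun _ => norm_nonneg _) (fun k => ?_) (by simpa using hq.const_mul |z.im|⁻¹)
  refine Lp.norm_le_mul_norm_of_ae_le_mul ?_
  filter_upwards [Lp.coeFn_sub (toLp hmom (q k)) ((memLp_inv_ofReal_sub_mul hF hz).toLp _),
    Lp.coeFn_sub (toLp hmom ((X - C z) * q k)) (hF.toLp F), coeFn_toLp hmom (q k),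
    coeFn_toLp hmom ((X - C z) * q k), hF.coeFn_toLp, (memLp_inv_ofReal_sub_mul hF hz).coeFn_toLp]
    with x h₁ h₂ h₃ h₄ h₅ h₆
  have hx : (x : ℂ) - z ≠ 0 := fun h => hz (by simpa using congrArg Complex.im h)
  have hdiv : (q k).eval (x : ℂ) - ((x : ℂ) - z)⁻¹ * F x =
      ((x : ℂ) - z)⁻¹ * (((X - C z) * q k).eval (x : ℂ) - F x) := by
    rw [eval_mul, eval_sub, eval_X, eval_C]
    field_simp
  rw [h₁, h₂, Pi.sub_apply, Pi.sub_apply, h₃, h₄, h₅, h₆, hdiv, norm_mul]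
  exact mul_le_mul_of_nonneg_right (Complex.norm_inv_ofReal_sub_le hz x) (norm_nonneg _)

end Moments

section SameMoments

variable {ν₁ ν₂ : Measure ℝ} (hmom₁ : ∀ n : ℕ, Integrable (fun x : ℝ => x ^ n) ν₁)
  (hmom₂ : ∀ n : ℕ, Integrable (fun x : ℝ => x ^ n) ν₂)
  (heq : ∀ n : ℕ, ∫ x, x ^ n ∂ν₁ = ∫ x, x ^ n ∂ν₂)
include hmom₁ hmom₂ heq

lemma integral_eval_ofReal_eq (p : ℂ[X]) :
    ∫ x, p.eval (x : ℂ) ∂ν₁ = ∫ x, p.eval (x : ℂ) ∂ν₂ := by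
  have hpow (ν : Measure ℝ) (n : ℕ) : ∫ x, (x : ℂ) ^ n ∂ν = ((∫ x, x ^ n ∂ν : ℝ) : ℂ) := by
    simp_rw [← Complex.ofReal_pow]
    exact integral_ofReal
  simp_rw [eval_eq_sum_range]
  rw [integral_finsetSum _ fun n _ => (integrable_ofReal_pow hmom₁ n).const_mul _,
    integral_finsetSum _ fun n _ => (integrable_ofReal_pow hmom₂ n).const_mul _]
  simp_rw [integral_const_mul, hpow, heq]

lemma inner_toLp_eq (p q : ℂ[X]) :
    inner ℂ (toLp hmom₁ p) (toLp hmom₁ q) = inner ℂ (toLp hmom₂ p) (toLp hmom₂ q) := by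
  rw [inner_toLp_toLp, inner_toLp_toLp, integral_eval_ofReal_eq hmom₁ hmom₂ heq]

lemma dist_toLp_eq (p q : ℂ[X]) :
    dist (toLp hmom₁ p) (toLp hmom₁ q) = dist (toLp hmom₂ p) (toLp hmom₂ q) := by
  simp_rw [dist_eq_norm, ← map_sub, @norm_eq_sqrt_re_inner ℂ, inner_toLp_eq hmom₁ hmom₂ heq]

end SameMoments

section CommonLimit

variable {ν₁ ν₂ : Measure ℝ} (hmom₁ : ∀ n : ℕ, Integrable (fun x : ℝ => x ^ n) ν₁)
  (hmom₂ : ∀ n : ℕ, Integrable (fun x : ℝ => x ^ n) ν₂)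

def IsCommonPolyLimit (F : ℝ → ℂ) : Prop :=
  ∃ (h₁ : MemLp F 2 ν₁) (h₂ : MemLp F 2 ν₂) (p : ℕ → ℂ[X]),
    Tendsto (fun k => toLp hmom₁ (p k)) atTop (𝓝 (h₁.toLp F)) ∧
    Tendsto (fun k => toLp hmom₂ (p k)) atTop (𝓝 (h₂.toLp F))

lemma isCommonPolyLimit_eval (p : ℂ[X]) :
    IsCommonPolyLimit hmom₁ hmom₂ fun x : ℝ => p.eval (x : ℂ) :=
  ⟨memLp_two_eval_ofReal hmom₁ p, memLp_two_eval_ofReal hmom₂ p, fun _ => p, tendsto_const_nhds,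
    tendsto_const_nhds⟩

variable {hmom₁ hmom₂} (heq : ∀ n : ℕ, ∫ x, x ^ n ∂ν₁ = ∫ x, x ^ n ∂ν₂)
include heq

lemma IsCommonPolyLimit.integral_eq {F : ℝ → ℂ} (hF : IsCommonPolyLimit hmom₁ hmom₂ F) :
    ∫ x, F x ∂ν₁ = ∫ x, F x ∂ν₂ := by
  obtain ⟨h₁, h₂, p, hp₁, hp₂⟩ := hF
  have hintegral {ν : Measure ℝ} (hmom : ∀ n : ℕ, Integrable (fun x : ℝ => x ^ n) ν)
      (h : MemLp F 2 ν) : inner ℂ (toLp hmom 1) (h.toLp F) = ∫ x, F x ∂ν := by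
    rw [inner_toLp_left]
    refine integral_congr_ae ?_
    filter_upwards [h.coeFn_toLp] with x hx
    rw [hx, eval_one, map_one, one_mul]
  rw [← hintegral hmom₁ h₁, ← hintegral hmom₂ h₂]
  refine tendsto_nhds_unique ?_ (tendsto_const_nhds.inner (𝕜 := ℂ) hp₂)
  simpa only [inner_toLp_eq hmom₁ hmom₂ heq] using
    (tendsto_const_nhds (x := toLp hmom₁ 1)).inner (𝕜 := ℂ) hp₁

lemma tendsto_toLp_of_tendsto_toLp {a b : ℕ → ℂ[X]} {f₁ : Lp ℂ 2 ν₁} {f₂ : Lp ℂ 2 ν₂}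
    (ha₁ : Tendsto (fun k => toLp hmom₁ (a k)) atTop (𝓝 f₁))
    (hb₁ : Tendsto (fun k => toLp hmom₁ (b k)) atTop (𝓝 f₁))
    (hb₂ : Tendsto (fun k => toLp hmom₂ (b k)) atTop (𝓝 f₂)) :
    Tendsto (fun k => toLp hmom₂ (a k)) atTop (𝓝 f₂) := by
  refine hb₂.congr_dist ?_
  simpa only [dist_toLp_eq hmom₁ hmom₂ heq, dist_self] using hb₁.dist ha₁

lemma IsCommonPolyLimit.inv_ofReal_sub_mul {z : ℂ} (hz : z.im ≠ 0)
    (hdense : Dense (Set.range fun q : ℂ[X] => toLp hmom₁ ((X - C z) * q))) {F : ℝ → ℂ}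
    (hF : IsCommonPolyLimit hmom₁ hmom₂ F) :
    IsCommonPolyLimit hmom₁ hmom₂ fun x : ℝ => ((x : ℂ) - z)⁻¹ * F x := by
  obtain ⟨h₁, h₂, p, hp₁, hp₂⟩ := hF
  obtain ⟨a, ha, hlim⟩ := mem_closure_iff_seq_limit.mp (hdense (h₁.toLp F))
  choose q hq using ha
  have hq₁ : Tendsto (fun k => toLp hmom₁ ((X - C z) * q k)) atTop (𝓝 (h₁.toLp F)) := by
    simpa only [hq] using hlim
  have hq₂ := tendsto_toLp_of_tendsto_toLp heq hq₁ hp₁ hp₂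
  exact ⟨_, _, q, tendsto_toLp_of_tendsto_toLp_mul hmom₁ h₁ hz hq₁,
    tendsto_toLp_of_tendsto_toLp_mul hmom₂ h₂ hz hq₂⟩

open BoundedContinuousFunction Complex in
lemma isCommonPolyLimit_invOfRealSubI_pow_mul
    (hdense : ∀ z : ℂ, z.im ≠ 0 → Dense (Set.range fun q : ℂ[X] => toLp hmom₁ ((X - C z) * q)))
    (m n : ℕ) :
    IsCommonPolyLimit hmom₁ hmom₂ ⇑(invOfRealSubI ^ m * star invOfRealSubI ^ n) := by
  induction m with
  | zero =>
    induction n with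
    | zero =>
      convert isCommonPolyLimit_eval hmom₁ hmom₂ 1 using 1
      ext x
      simp only [pow_zero, mul_one, eval_one]
      rfl
    | succ n ih =>
      convert ih.inv_ofReal_sub_mul heq (by simp) (hdense (-I) (by simp)) using 1
      ext x
      simp only [mul_apply, pow_apply, star_invOfRealSubI_apply]
      ring
  | succ m ih =>
    convert ih.inv_ofReal_sub_mul heq (by simp) (hdense I (by simp)) using 1
    ext x
    simp only [mul_apply, pow_apply, invOfRealSubI_apply]
    ring

end CommonLimit

end Polynomial

theorem stmt5_general (ν₁ ν₂ : Measure ℝ)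
    (hmom₁ : ∀ n : ℕ, Integrable (fun x : ℝ => x ^ n) ν₁)
    (hmom₂ : ∀ n : ℕ, Integrable (fun x : ℝ => x ^ n) ν₂)
    (heq : ∀ n : ℕ, ∫ x, x ^ n ∂ν₁ = ∫ x, x ^ n ∂ν₂)
    (T : Lp ℂ 2 ν₁ →ₗ.[ℂ] Lp ℂ 2 ν₁)
    (hdom : ∀ g : Lp ℂ 2 ν₁, g ∈ T.domain ↔
      ∃ p : Polynomial ℂ, (g : ℝ → ℂ) =ᵐ[ν₁] fun x : ℝ => p.eval (x : ℂ))
    (hdd : Dense (T.domain : Set (Lp ℂ 2 ν₁)))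
    (haction : ∀ (g : T.domain) (p : Polynomial ℂ),
      ((g : Lp ℂ 2 ν₁) : ℝ → ℂ) =ᵐ[ν₁] (fun x : ℝ => p.eval (x : ℂ)) →
      (T g : ℝ → ℂ) =ᵐ[ν₁] fun x : ℝ => (x : ℂ) * p.eval (x : ℂ))
    (hsymm : ∀ f g : T.domain,
      inner (𝕜 := ℂ) (T f) ((g : Lp ℂ 2 ν₁)) = inner (𝕜 := ℂ) ((f : Lp ℂ 2 ν₁)) (T g))
    (hesa : T.closure = T.adjoint) :
    ν₁ = ν₂ := by
  have hfinite {ν : Measure ℝ} (hmom : ∀ n : ℕ, Integrable (fun x : ℝ => x ^ n) ν) :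
      IsFiniteMeasure ν :=
    (integrable_const_iff_isFiniteMeasure one_ne_zero).mp (by simpa using hmom 0)
  have := hfinite hmom₁
  have := hfinite hmom₂
  have hdense (z : ℂ) (hz : z.im ≠ 0) :
      Dense (Set.range fun q : ℂ[X] => toLp hmom₁ ((X - C z) * q)) :=
    (T.dense_range_sub_smul hdd hsymm hesa hz).mono
      (range_sub_smul_subset_range_toLp hmom₁ (fun g => (hdom g).mp g.2) haction z)
  exact Measure.ext_of_integral_invOfRealSubI_pow_mul_eq fun m n =>
    (isCommonPolyLimit_invOfRealSubI_pow_mul (hmom₂ := hmom₂) heq hdense m n).integral_eq heq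

/-- Uniqueness of the representing measure (Sections 4.2 and 7.2 of the paper): if two
Borel measures on `ℝ` have the same (finite) moments, polynomials are dense in `L²(ν₁)`,
and the multiplication-by-`x` operator `T` with domain the polynomial classes in `L²(ν₁)`
is essentially self-adjoint (its closure equals its adjoint), then the measures coincide. -/
theorem stmt5 (ν₁ ν₂ : Measure ℝ)
    (hmom₁ : ∀ n : ℕ, Integrable (fun x : ℝ => x ^ n) ν₁)
    (hmom₂ : ∀ n : ℕ, Integrable (fun x : ℝ => x ^ n) ν₂)
    (heq : ∀ n : ℕ, ∫ x, x ^ n ∂ν₁ = ∫ x, x ^ n ∂ν₂)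
    (hdense : Dense {g : Lp ℂ 2 ν₁ |
      ∃ p : Polynomial ℂ, (g : ℝ → ℂ) =ᵐ[ν₁] fun x : ℝ => p.eval (x : ℂ)})
    (T : Lp ℂ 2 ν₁ →ₗ.[ℂ] Lp ℂ 2 ν₁)
    (hdom : ∀ g : Lp ℂ 2 ν₁, g ∈ T.domain ↔
      ∃ p : Polynomial ℂ, (g : ℝ → ℂ) =ᵐ[ν₁] fun x : ℝ => p.eval (x : ℂ))
    (hdd : Dense (T.domain : Set (Lp ℂ 2 ν₁)))
    (haction : ∀ (g : T.domain) (p : Polynomial ℂ),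
      ((g : Lp ℂ 2 ν₁) : ℝ → ℂ) =ᵐ[ν₁] (fun x : ℝ => p.eval (x : ℂ)) →
      (T g : ℝ → ℂ) =ᵐ[ν₁] fun x : ℝ => (x : ℂ) * p.eval (x : ℂ))
    (hsymm : ∀ f g : T.domain,
      inner (𝕜 := ℂ) (T f) ((g : Lp ℂ 2 ν₁)) = inner (𝕜 := ℂ) ((f : Lp ℂ 2 ν₁)) (T g))
    (hesa : T.closure = T.adjoint) :
    ν₁ = ν₂ :=
  stmt5_general ν₁ ν₂ hmom₁ hmom₂ heq T hdom hdd haction hsymm hesa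
end

section
/- Let K be a complex Hilbert space and T a densely defined symmetric operator in K with domain D. Let ι be a nonempty index type, a : ι → ℝ a family of real numbers, and λ a nonzero real number. In the Hilbert space H = ℓ²(ι, K) (the lp space with p = 2 of the constant family of copies of K), let A be the operator with domain consisting of all finitely supported families x with x_i ∈ D for every i, defined by (A x)_i = a_i · x_i + λ · T(x_i). Then A is densely defined and symmetric, and A is essentially self-adjoint (its closure equals its adjoint) if and only if T is essentially self-adjoint. -/
/-!
A densely defined symmetric operator `S` on a Hilbert space satisfies `S̄ ≤ S†`, and conversely
`S† ≤ S̄` as soon as `S†` is symmetric: every vector of `graph(S)ᗮ` in `E ⊕ E` has the form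
`(-S† v, v)`, so symmetry of `S†` puts `graph(S†)` inside `graph(S)ᗮᗮ = closure(graph S)`.
Hence `S` is essentially self-adjoint iff `S†` is symmetric.

For `A = ⊕ᵢ (aᵢ + λ T)`, testing against vectors supported at a single index shows that `A†`
acts componentwise as `aᵢ + λ T†` and that `A†` contains every `lp.single i u` with
`u ∈ dom T†`. The real shifts `aᵢ` drop out of the symmetry condition and `λ ≠ 0` cancels,
so `A†` is symmetric iff `T†` is.
-/

open scoped LinearPMap InnerProductSpace

namespace LinearPMap

variable {𝕜 E F : Type*} [RCLike 𝕜] [NormedAddCommGroup E] [InnerProductSpace 𝕜 E]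
  [NormedAddCommGroup F] [InnerProductSpace 𝕜 F]

theorem IsFormalAdjoint.closure_right {T : E →ₗ.[𝕜] F} {S : F →ₗ.[𝕜] E} (hS : S.IsClosable)
    (h : T.IsFormalAdjoint S) : T.IsFormalAdjoint S.closure := by
  intro x
  let C : Set (F × E) := {p | ⟪T x, p.1⟫_𝕜 = ⟪(x : E), p.2⟫_𝕜}
  have hC : _root_.IsClosed C :=
    isClosed_eq (continuous_const.inner continuous_fst) (continuous_const.inner continuous_snd)
  have hgraph : (S.graph : Set (F × E)) ⊆ C := by
    rintro ⟨_, _⟩ hp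
    obtain ⟨y, rfl, rfl⟩ := (mem_graph_iff S).mp hp
    exact h x y
  have hclosure : (S.closure.graph : Set (F × E)) ⊆ C := by
    rw [← hS.graph_closure_eq_closure_graph, Submodule.topologicalClosure_coe]
    exact closure_minimal hgraph hC
  exact fun y => hclosure (S.closure.mem_graph y)

variable [CompleteSpace E] {S : E →ₗ.[𝕜] E}

theorem IsFormalAdjoint.isClosable (hS : Dense (S.domain : Set E)) (h : S.IsFormalAdjoint S) :
    S.IsClosable :=
  (adjoint_isClosed hS).isClosable.leIsClosable (h.le_adjoint hS)

theorem IsFormalAdjoint.closure_le_adjoint (hS : Dense (S.domain : Set E))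
    (h : S.IsFormalAdjoint S) : S.closure ≤ S† := by
  refine le_of_le_graph ?_
  rw [← (h.isClosable hS).graph_closure_eq_closure_graph]
  exact S.graph.topologicalClosure_minimal (le_graph_of_le (h.le_adjoint hS)) (adjoint_isClosed hS)

theorem graph_adjoint_le_topologicalClosure_graph (hS : Dense (S.domain : Set E))
    (h : S†.IsFormalAdjoint S†) : S†.graph ≤ S.graph.topologicalClosure := by
  -- the graph of `S` in the Hilbert space `WithLp 2 (E × E)`, where `closure = ᗮᗮ`
  set G := S.graph.comap (WithLp.linearEquiv 2 𝕜 (E × E)).toLinearMap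
  have hG : (G.topologicalClosure : Set (WithLp 2 (E × E)))
      = WithLp.ofLp ⁻¹' (S.graph.topologicalClosure : Set (E × E)) := by
    simp only [Submodule.topologicalClosure_coe]
    exact ((WithLp.homeomorphProd 2 E E).preimage_closure (S.graph : Set (E × E))).symm
  rintro ⟨_, _⟩ hp
  obtain ⟨y, rfl, rfl⟩ := (mem_graph_iff _).mp hp
  suffices WithLp.toLp 2 ((y : E), S† y) ∈ Gᗮᗮ by
    rw [Submodule.orthogonal_orthogonal_eq_closure, ← SetLike.mem_coe, hG] at this
    exact this
  refine (Submodule.mem_orthogonal' _ _).mpr fun u hu => ?_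
  have hu' : (u.snd, -u.fst) ∈ S†.graph := by
    rw [adjoint_graph_eq_graph_adjoint hS, Submodule.mem_adjoint_iff]
    intro a b hab
    obtain ⟨x, rfl, rfl⟩ := (mem_graph_iff S).mp hab
    have := hu (WithLp.toLp 2 ((x : E), S x)) (S.mem_graph x)
    rw [WithLp.prod_inner_apply] at this
    simp only [inner_neg_right, sub_neg_eq_add]
    rwa [add_comm]
  obtain ⟨z, hz, hSz⟩ : ∃ z : S†.domain, (z : E) = u.snd ∧ S† z = -u.fst :=
    (mem_graph_iff _).mp hu'
  have hfst : u.fst = -S† z := by rw [hSz, neg_neg]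
  change ⟪(y : E), u.fst⟫_𝕜 + ⟪S† y, u.snd⟫_𝕜 = 0
  rw [hfst, ← hz, inner_neg_right, h y z, neg_add_cancel]

theorem IsFormalAdjoint.adjoint_le_closure (hS : Dense (S.domain : Set E))
    (h : S.IsFormalAdjoint S) (hadj : S†.IsFormalAdjoint S†) : S† ≤ S.closure := by
  refine le_of_le_graph ?_
  rw [← (h.isClosable hS).graph_closure_eq_closure_graph]
  exact graph_adjoint_le_topologicalClosure_graph hS hadj

theorem IsFormalAdjoint.closure_eq_adjoint_iff (hS : Dense (S.domain : Set E))
    (h : S.IsFormalAdjoint S) : S.closure = S† ↔ S†.IsFormalAdjoint S† := by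
  refine ⟨fun hclosure => ?_, fun hadj => (h.closure_le_adjoint hS).antisymm
    (h.adjoint_le_closure hS hadj)⟩
  have := (adjoint_isFormalAdjoint hS).closure_right (h.isClosable hS)
  rwa [hclosure] at this

end LinearPMap

theorem lp.dense_of_dense_single {ι : Type*} {E : ι → Type*} [∀ i, NormedAddCommGroup (E i)]
    [DecidableEq ι] {p : ENNReal} [Fact (1 ≤ p)] (hp : p ≠ ⊤) (V : AddSubgroup (lp E p))
    (h : ∀ i, Dense {u | lp.single p i u ∈ V}) : Dense (V : Set (lp E p)) := by
  have hsingle : ∀ i u, lp.single p i u ∈ V.topologicalClosure := by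
    intro i u
    have := (lp.isometry_single (E := E) (p := p) i).continuous.range_subset_closure_image_dense
      (h i) ⟨u, rfl⟩
    rw [← SetLike.mem_coe, AddSubgroup.topologicalClosure_coe]
    exact closure_mono (Set.image_subset_iff.mpr fun _ hv => hv) this
  intro f
  rw [← AddSubgroup.topologicalClosure_coe]
  exact V.isClosed_topologicalClosure.mem_of_tendsto (lp.hasSum_single hp f)
    (Filter.Eventually.of_forall fun s => V.topologicalClosure.sum_mem fun i _ => hsingle i _)

open scoped lp

section DirectSum

variable {K ι : Type*} [NormedAddCommGroup K] [InnerProductSpace ℂ K]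

theorem inner_ofReal_smul_add_ofReal_smul_eq_iff (c l : ℝ) (x y X Y : K) :
    ⟪(c : ℂ) • x + (l : ℂ) • X, y⟫_ℂ = ⟪x, (c : ℂ) • y + (l : ℂ) • Y⟫_ℂ ↔
      (l : ℂ) * ⟪X, y⟫_ℂ = l * ⟪x, Y⟫_ℂ := by
  simp only [inner_add_left, inner_add_right, inner_smul_left, inner_smul_right,
    Complex.conj_ofReal, add_right_inj]

/-- `A = ⊕ᵢ (aᵢ + λ T)` on the finitely supported families with components in `dom T`. -/
structure IsDirectSumOf (A : ℓ²(ι, K) →ₗ.[ℂ] ℓ²(ι, K)) (a : ι → ℝ) (lam : ℝ)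
    (T : K →ₗ.[ℂ] K) : Prop where
  mem_domain_iff : ∀ x : ℓ²(ι, K), x ∈ A.domain ↔
    ({i : ι | x i ≠ 0}.Finite ∧ ∀ i, x i ∈ T.domain)
  apply_apply : ∀ (x : A.domain) (hx : ∀ i, (x : ℓ²(ι, K)) i ∈ T.domain) (i : ι),
    (A x) i = (a i : ℂ) • (x : ℓ²(ι, K)) i + (lam : ℂ) • T ⟨(x : ℓ²(ι, K)) i, hx i⟩

namespace IsDirectSumOf

open LinearPMap

variable {A : ℓ²(ι, K) →ₗ.[ℂ] ℓ²(ι, K)} {a : ι → ℝ} {lam : ℝ} {T : K →ₗ.[ℂ] K}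

theorem mem_domain_apply (hA : IsDirectSumOf A a lam T) (x : A.domain) (i : ι) :
    (x : ℓ²(ι, K)) i ∈ T.domain :=
  ((hA.mem_domain_iff x).mp x.2).2 i

theorem single_mem_domain [DecidableEq ι] (hA : IsDirectSumOf A a lam T) (i : ι) {u : K}
    (hu : u ∈ T.domain) : lp.single 2 i u ∈ A.domain := by
  rw [hA.mem_domain_iff]
  refine ⟨(Set.finite_singleton i).subset fun j hj => by_contra fun hji => hj ?_, fun j => ?_⟩
  · exact lp.single_apply_ne (E := fun _ : ι => K) 2 i u hji
  · by_cases hji : j = i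
    · subst hji
      rwa [lp.single_apply_self]
    · rw [lp.single_apply_ne (E := fun _ : ι => K) 2 i u hji]
      exact T.domain.zero_mem

theorem apply_single [DecidableEq ι] (hA : IsDirectSumOf A a lam T) (i : ι) {u : K}
    (hu : u ∈ T.domain) :
    A ⟨lp.single 2 i u, hA.single_mem_domain i hu⟩
      = lp.single 2 i ((a i : ℂ) • u + (lam : ℂ) • T ⟨u, hu⟩) := by
  ext j
  rw [hA.apply_apply _ (hA.mem_domain_apply _)]
  by_cases hji : j = i
  · subst hji
    simp only [lp.single_apply_self]
  · have hT0 : T ⟨0, T.domain.zero_mem⟩ = 0 := T.toFun.map_zero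
    simp only [lp.single_apply_ne (E := fun _ : ι => K) 2 i _ hji, hT0, smul_zero, add_zero]

theorem dense_domain (hA : IsDirectSumOf A a lam T) (hT : Dense (T.domain : Set K)) :
    Dense (A.domain : Set ℓ²(ι, K)) := by
  classical
  exact lp.dense_of_dense_single (by norm_num) A.domain.toAddSubgroup
    fun i => hT.mono fun _ hu => hA.single_mem_domain i hu

theorem isFormalAdjoint_self (hA : IsDirectSumOf A a lam T) (hT : T.IsFormalAdjoint T) :
    A.IsFormalAdjoint A := by
  intro x y
  rw [lp.inner_eq_tsum, lp.inner_eq_tsum]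
  refine tsum_congr fun i => ?_
  rw [hA.apply_apply x (hA.mem_domain_apply x), hA.apply_apply y (hA.mem_domain_apply y)]
  exact (inner_ofReal_smul_add_ofReal_smul_eq_iff _ _ _ _ _ _).mpr
    (congrArg _ (hT ⟨_, hA.mem_domain_apply x i⟩ ⟨_, hA.mem_domain_apply y i⟩))

variable [CompleteSpace K]

theorem adjoint_apply_apply (hA : IsDirectSumOf A a lam T) (hT : Dense (T.domain : Set K))
    (hlam : lam ≠ 0) (y : A†.domain) (i : ι) :
    ∃ hy : (y : ℓ²(ι, K)) i ∈ T†.domain,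
      (A† y) i = (a i : ℂ) • (y : ℓ²(ι, K)) i + (lam : ℂ) • T† ⟨(y : ℓ²(ι, K)) i, hy⟩ := by
  classical
  have hlam' : (lam : ℂ) ≠ 0 := by exact_mod_cast hlam
  set w : K := (lam : ℂ)⁻¹ • ((A† y : ℓ²(ι, K)) i - (a i : ℂ) • (y : ℓ²(ι, K)) i)
  have hAy : (A† y : ℓ²(ι, K)) i = (a i : ℂ) • (y : ℓ²(ι, K)) i + (lam : ℂ) • w := by
    rw [smul_smul, mul_inv_cancel₀ hlam', one_smul, add_sub_cancel]
  have hw : ∀ d : T.domain, ⟪w, (d : K)⟫_ℂ = ⟪(y : ℓ²(ι, K)) i, T d⟫_ℂ := by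
    intro d
    have h := adjoint_isFormalAdjoint (hA.dense_domain hT) y ⟨_, hA.single_mem_domain i d.2⟩
    rw [hA.apply_single i d.2, lp.inner_single_right, lp.inner_single_right, hAy] at h
    exact mul_left_cancel₀ hlam' ((inner_ofReal_smul_add_ofReal_smul_eq_iff _ _ _ _ _ _).mp h)
  exact ⟨mem_adjoint_domain_of_exists _ ⟨w, hw⟩, by rw [adjoint_apply_eq hT _ hw, hAy]⟩

theorem single_mem_adjoint_domain [DecidableEq ι] (hA : IsDirectSumOf A a lam T)
    (hT : Dense (T.domain : Set K)) (i : ι) {u : K} (hu : u ∈ T†.domain) :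
    ∃ h : lp.single 2 i u ∈ A†.domain,
      A† ⟨_, h⟩ = lp.single 2 i ((a i : ℂ) • u + (lam : ℂ) • T† ⟨u, hu⟩) := by
  have key : ∀ x : A.domain, ⟪lp.single 2 i ((a i : ℂ) • u + (lam : ℂ) • T† ⟨u, hu⟩),
      (x : ℓ²(ι, K))⟫_ℂ = ⟪lp.single 2 i u, A x⟫_ℂ := by
    intro x
    rw [lp.inner_single_left, lp.inner_single_left, hA.apply_apply x (hA.mem_domain_apply x)]
    exact (inner_ofReal_smul_add_ofReal_smul_eq_iff _ _ _ _ _ _).mpr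
      (congrArg _ (adjoint_isFormalAdjoint hT ⟨u, hu⟩ ⟨_, _⟩))
  exact ⟨mem_adjoint_domain_of_exists _ ⟨_, key⟩, adjoint_apply_eq (hA.dense_domain hT) _ key⟩

theorem adjoint_isFormalAdjoint_self_iff [Nonempty ι] (hA : IsDirectSumOf A a lam T)
    (hT : Dense (T.domain : Set K)) (hlam : lam ≠ 0) :
    A†.IsFormalAdjoint A† ↔ T†.IsFormalAdjoint T† := by
  constructor
  · intro hAadj u v
    classical
    let i : ι := Classical.arbitrary ι
    obtain ⟨hu, hAu⟩ := hA.single_mem_adjoint_domain hT i u.2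
    obtain ⟨hv, hAv⟩ := hA.single_mem_adjoint_domain hT i v.2
    have h := hAadj ⟨_, hu⟩ ⟨_, hv⟩
    rw [hAu, hAv, lp.inner_single_left, lp.inner_single_left, lp.single_apply_self,
      lp.single_apply_self] at h
    exact mul_left_cancel₀ (by exact_mod_cast hlam)
      ((inner_ofReal_smul_add_ofReal_smul_eq_iff _ _ _ _ _ _).mp h)
  · intro hTadj y z
    rw [lp.inner_eq_tsum, lp.inner_eq_tsum]
    refine tsum_congr fun i => ?_
    obtain ⟨hy, hAy⟩ := hA.adjoint_apply_apply hT hlam y i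
    obtain ⟨hz, hAz⟩ := hA.adjoint_apply_apply hT hlam z i
    rw [hAy, hAz]
    exact (inner_ofReal_smul_add_ofReal_smul_eq_iff _ _ _ _ _ _).mpr
      (congrArg _ (hTadj ⟨_, hy⟩ ⟨_, hz⟩))

end IsDirectSumOf

end DirectSum

/-- Operator-theoretic content of Theorem 7.1 of the paper: in `ℓ²(ι, K)`, the direct-sum
operator `A` acting on finitely supported families with components in the domain of a
densely defined symmetric operator `T` by `(A x)_i = a_i • x_i + λ • T x_i` is densely
defined and symmetric, and it is essentially self-adjoint iff `T` is. -/
theorem stmt8 {K : Type*} [NormedAddCommGroup K] [InnerProductSpace ℂ K]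
    [CompleteSpace K] {ι : Type*} [Nonempty ι] (a : ι → ℝ) (lam : ℝ) (hlam : lam ≠ 0)
    (T : K →ₗ.[ℂ] K) (hTdd : Dense (T.domain : Set K))
    (hTsymm : ∀ x y : T.domain,
      inner (𝕜 := ℂ) (T x) ((y : K)) = inner (𝕜 := ℂ) ((x : K)) (T y))
    (A : lp (fun _ : ι => K) 2 →ₗ.[ℂ] lp (fun _ : ι => K) 2)
    (hAdom : ∀ x : lp (fun _ : ι => K) 2, x ∈ A.domain ↔
      ({i : ι | x i ≠ 0}.Finite ∧ ∀ i, x i ∈ T.domain))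
    (hAact : ∀ (x : A.domain)
      (hx : ∀ i, (x : lp (fun _ : ι => K) 2) i ∈ T.domain) (i : ι),
      (A x) i = (a i : ℂ) • (x : lp (fun _ : ι => K) 2) i
        + (lam : ℂ) • T ⟨(x : lp (fun _ : ι => K) 2) i, hx i⟩) :
    Dense (A.domain : Set (lp (fun _ : ι => K) 2)) ∧
    (∀ x y : A.domain,
      inner (𝕜 := ℂ) (A x) ((y : lp (fun _ : ι => K) 2))
        = inner (𝕜 := ℂ) ((x : lp (fun _ : ι => K) 2)) (A y)) ∧
    (A.closure = A.adjoint ↔ T.closure = T.adjoint) := by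
  have hA : IsDirectSumOf A a lam T := ⟨hAdom, hAact⟩
  have hAdense := hA.dense_domain hTdd
  have hAsymm : A.IsFormalAdjoint A := hA.isFormalAdjoint_self hTsymm
  refine ⟨hAdense, hAsymm, ?_⟩
  rw [hAsymm.closure_eq_adjoint_iff hAdense,
    LinearPMap.IsFormalAdjoint.closure_eq_adjoint_iff hTdd hTsymm]
  exact hA.adjoint_isFormalAdjoint_self_iff hTdd hlam
end

section
/- Let G be an additive abelian group and K a complex Hilbert space, and let H = ℓ²(G, K) be the Hilbert space of square-summable K-valued families indexed by G. For a ∈ G let T_a : H → H be the translation unitary (T_a x)(g) = x(g − a). A character of G is a map χ : G → ℂ with |χ(g)| = 1 for all g and χ(g + g') = χ(g)·χ(g'); for a character χ let D_χ : H → H be the diagonal unitary (D_χ x)(g) = χ(g)·x(g). Let X be a set of characters of G that is closed under pointwise complex conjugation and separates points, i.e. for every g ≠ 0 there is χ ∈ X with χ(g) ≠ 1. Suppose V ⊆ H is a closed linear subspace with T_a(V) ⊆ V for every a ∈ G and D_χ(V) ⊆ V for every χ ∈ X. Then there exists a closed linear subspace K̃ ⊆ K such that V = {x ∈ H : x(g)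 ∈ K̃ for all g ∈ G}. -/
/-!
For `y ∈ Vᗮ` and `v ∈ V`, the family `c g = ⟪y g, v g⟫` is summable and `∑ f g * c g = ⟪y, f v⟫ = 0`
for every `f` in the algebra generated by `X`, since `V` is invariant under multiplication by `f`.
That algebra contains peak functions at any `g₀`: the averages `(1/N) ∑_{n<N} (χ / χ g₀)ⁿ` have
modulus at most `1`, equal `1` at `g₀` and are `O(1/N)` wherever `χ ≠ χ g₀`, and finitely many of
them multiply to a function that is small on a prescribed finite set avoiding `g₀`. Testing `c`
against these shows `c = 0`. Translating `v`, every value of `y` is orthogonal to every value of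
`v`, so `V` consists exactly of the `x` whose values are orthogonal to all values of elements of
`Vᗮ`, a closed subspace of `K`.
-/

open scoped ENNReal

section PowMean

variable (𝕜 : Type*) [RCLike 𝕜]

def powMean {A : Type*} [Ring A] [Algebra 𝕜 A] (N : ℕ) (a : A) : A :=
  (N : 𝕜)⁻¹ • ∑ n ∈ Finset.range N, a ^ n

variable {𝕜}

theorem powMean_mem {A : Type*} [Ring A] [Algebra 𝕜 A] {S : Subalgebra 𝕜 A} (N : ℕ) {a : A}
    (ha : a ∈ S) : powMean 𝕜 N a ∈ S :=
  S.smul_mem (S.sum_mem fun n _ => S.pow_mem ha n) _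

theorem powMean_apply {ι : Type*} (N : ℕ) (f : ι → 𝕜) (i : ι) :
    powMean 𝕜 N f i = powMean 𝕜 N (f i) := by
  simp [powMean, Finset.sum_apply]

theorem powMean_one {N : ℕ} (hN : N ≠ 0) : powMean 𝕜 N (1 : 𝕜) = 1 := by
  simp [powMean, hN]

theorem norm_powMean_le_one (N : ℕ) {z : 𝕜} (hz : ‖z‖ ≤ 1) : ‖powMean 𝕜 N z‖ ≤ 1 := by
  rcases Nat.eq_zero_or_pos N with rfl | hN
  · simp [powMean]
  have hsum : ‖∑ n ∈ Finset.range N, z ^ n‖ ≤ N := by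
    refine (norm_sum_le _ _).trans ?_
    simpa using Finset.sum_le_sum fun n (_ : n ∈ Finset.range N) =>
      (norm_pow_le z n).trans (pow_le_one₀ (norm_nonneg z) hz)
  rw [powMean, norm_smul, norm_inv, RCLike.norm_natCast]
  exact (inv_mul_le_one₀ (by exact_mod_cast hN)).2 hsum

theorem norm_powMean_le (N : ℕ) {z : 𝕜} (hz : ‖z‖ ≤ 1) (hz1 : z ≠ 1) :
    ‖powMean 𝕜 N z‖ ≤ 2 / (N * ‖z - 1‖) := by
  have hnum : ‖z ^ N - 1‖ ≤ 2 :=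
    calc ‖z ^ N - 1‖ ≤ ‖z ^ N‖ + ‖(1 : 𝕜)‖ := norm_sub_le _ _
      _ ≤ 1 + 1 := by
        rw [norm_one, norm_pow]; gcongr; exact pow_le_one₀ (norm_nonneg z) hz
      _ = 2 := by norm_num
  rw [powMean, geom_sum_eq hz1, norm_smul, norm_div, norm_inv, RCLike.norm_natCast,
    inv_mul_eq_div, div_div, mul_comm]
  gcongr

end PowMean

section PeakFunction

variable {ι 𝕜 : Type*} [RCLike 𝕜]

structure IsPeakFunction (f : ι → 𝕜) (i₀ : ι) (T : Finset ι) (δ : ℝ) : Prop where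
  norm_le_one : ∀ i, ‖f i‖ ≤ 1
  apply_self : f i₀ = 1
  norm_le : ∀ i ∈ T, i ≠ i₀ → ‖f i‖ ≤ δ

theorem isPeakFunction_one {i₀ : ι} {T : Finset ι} (hT : ∀ i ∈ T, i = i₀) (δ : ℝ) :
    IsPeakFunction (1 : ι → 𝕜) i₀ T δ where
  norm_le_one _ := by simp
  apply_self := rfl
  norm_le i hi hne := absurd (hT i hi) hne

theorem IsPeakFunction.mul [DecidableEq ι] {f g : ι → 𝕜} {i₀ : ι} {S T : Finset ι} {δ : ℝ}
    (hf : IsPeakFunction f i₀ S δ) (hg : IsPeakFunction g i₀ T δ) :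
    IsPeakFunction (f * g) i₀ (S ∪ T) δ where
  norm_le_one i := by
    simpa [norm_mul] using mul_le_one₀ (hf.norm_le_one i) (norm_nonneg _) (hg.norm_le_one i)
  apply_self := by simp [hf.apply_self, hg.apply_self]
  norm_le i hi hne := by
    rw [Pi.mul_apply, norm_mul]
    rcases Finset.mem_union.1 hi with hi | hi
    · exact (mul_le_of_le_one_right (norm_nonneg _) (hg.norm_le_one i)).trans (hf.norm_le i hi hne)
    · exact (mul_le_of_le_one_left (norm_nonneg _) (hf.norm_le_one i)).trans (hg.norm_le i hi hne)

theorem exists_isPeakFunction_singleton {X : Set (ι → 𝕜)} (hX : ∀ χ ∈ X, ∀ i, ‖χ i‖ = 1)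
    (hsep : ∀ i j, i ≠ j → ∃ χ ∈ X, χ i ≠ χ j) (i₀ j : ι) {δ : ℝ} (hδ : 0 < δ) :
    ∃ f ∈ Algebra.adjoin 𝕜 X, IsPeakFunction f i₀ {j} δ := by
  by_cases hj : j = i₀
  · exact ⟨1, Subalgebra.one_mem _, isPeakFunction_one (by simpa using hj) δ⟩
  obtain ⟨χ, hχX, hχ⟩ := hsep j i₀ hj
  have hχ₀ : χ i₀ ≠ 0 := norm_ne_zero_iff.1 (by simp [hX χ hχX])
  set z : ι → 𝕜 := (χ i₀)⁻¹ • χ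
  have hz : ∀ i, ‖z i‖ = 1 := fun i => by simp [z, hX χ hχX]
  have hzj : z j ≠ 1 := by
    simpa [z, inv_mul_eq_one₀ hχ₀] using hχ.symm
  have hzj' : 0 < ‖z j - 1‖ := norm_pos_iff.2 (sub_ne_zero.2 hzj)
  obtain ⟨N, hN⟩ := exists_nat_gt (2 / (δ * ‖z j - 1‖))
  have hN0 : 0 < (N : ℝ) := lt_of_le_of_lt (by positivity) hN
  refine ⟨powMean 𝕜 N z, powMean_mem N (Subalgebra.smul_mem _ (Algebra.subset_adjoin hχX) _),
    fun i => ?_, ?_, ?_⟩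
  · rw [powMean_apply]; exact norm_powMean_le_one N (hz i).le
  · rw [powMean_apply, show z i₀ = 1 by simp [z, hχ₀]]
    exact powMean_one (by exact_mod_cast hN0.ne')
  · intro i hi _
    rw [Finset.mem_singleton.1 hi, powMean_apply]
    refine (norm_powMean_le N (hz j).le hzj).trans ?_
    rw [div_le_iff₀ (by positivity)]
    rw [div_lt_iff₀ (by positivity)] at hN
    nlinarith

theorem exists_isPeakFunction {X : Set (ι → 𝕜)} (hX : ∀ χ ∈ X, ∀ i, ‖χ i‖ = 1)
    (hsep : ∀ i j, i ≠ j → ∃ χ ∈ X, χ i ≠ χ j) (i₀ : ι) (T : Finset ι) {δ : ℝ} (hδ : 0 < δ) :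
    ∃ f ∈ Algebra.adjoin 𝕜 X, IsPeakFunction f i₀ T δ := by
  classical
  induction T using Finset.induction_on with
  | empty => exact ⟨1, Subalgebra.one_mem _, isPeakFunction_one (by simp) δ⟩
  | insert j T _ ih =>
    obtain ⟨f, hfX, hf⟩ := exists_isPeakFunction_singleton hX hsep i₀ j hδ
    obtain ⟨g, hgX, hg⟩ := ih
    exact ⟨f * g, Subalgebra.mul_mem _ hfX hgX, Finset.insert_eq j T ▸ hf.mul hg⟩

theorem IsPeakFunction.norm_apply_le {f c : ι → 𝕜} {i₀ : ι} {S : Finset ι} {δ : ℝ}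
    (hf : IsPeakFunction f i₀ S δ) (hδ : 0 ≤ δ) (hc : Summable c)
    (hfc : ∑' i, f i * c i = 0) :
    ‖c i₀‖ ≤ δ * ∑' i, ‖c i‖ + ∑' i : {i // i ∉ S}, ‖c i‖ := by
  classical
  have hc' : Summable fun i => ‖c i‖ := summable_norm_iff.2 hc
  have hfc' : Summable fun i => ‖f i * c i‖ :=
    hc'.of_nonneg_of_le (fun _ => norm_nonneg _) fun i => by
      simpa [norm_mul] using mul_le_of_le_one_left (norm_nonneg _) (hf.norm_le_one i)
  set b : ι → ℝ := fun i => δ * ‖c i‖ + (↑S : Set ι)ᶜ.indicator (fun i => ‖c i‖) i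
  have hb : Summable b := (hc'.mul_left δ).add (hc'.indicator _)
  have hbound : ∀ i, ‖if i = i₀ then 0 else f i * c i‖ ≤ b i := by
    intro i
    have hind : 0 ≤ (↑S : Set ι)ᶜ.indicator (fun i => ‖c i‖) i :=
      Set.indicator_nonneg (fun _ _ => norm_nonneg _) i
    split_ifs with hi
    · simp only [norm_zero, b]; positivity
    rw [norm_mul]
    by_cases hiS : i ∈ S
    · have := mul_le_mul_of_nonneg_right (hf.norm_le i hiS hi) (norm_nonneg (c i))
      simp only [b]; linarith
    · have := mul_le_of_le_one_left (norm_nonneg (c i)) (hf.norm_le_one i)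
      simp only [b, Set.indicator_of_mem (show i ∈ (↑S : Set ι)ᶜ from hiS)]
      nlinarith [norm_nonneg (c i)]
  have hci₀ : c i₀ = -∑' i, if i = i₀ then 0 else f i * c i := by
    have := (hfc'.of_norm).tsum_eq_add_tsum_ite i₀
    rw [hfc, hf.apply_self, one_mul] at this
    linear_combination -this
  calc ‖c i₀‖ ≤ ∑' i, b i := by
        rw [hci₀, norm_neg]
        exact tsum_of_norm_bounded hb.hasSum hbound
    _ = δ * ∑' i, ‖c i‖ + ∑' i : {i // i ∉ S}, ‖c i‖ := by
        rw [Summable.tsum_add (hc'.mul_left δ) (hc'.indicator _), tsum_mul_left, ← tsum_subtype]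
        rfl

theorem eq_zero_of_forall_mem_adjoin_tsum_mul_eq_zero {X : Set (ι → 𝕜)}
    (hX : ∀ χ ∈ X, ∀ i, ‖χ i‖ = 1) (hsep : ∀ i j, i ≠ j → ∃ χ ∈ X, χ i ≠ χ j) {c : ι → 𝕜}
    (hc : Summable c) (hzero : ∀ f ∈ Algebra.adjoin 𝕜 X, ∑' i, f i * c i = 0) : c = 0 := by
  funext i₀
  refine norm_le_zero_iff.1 (le_of_forall_pos_le_add fun ε hε => ?_)
  obtain ⟨S, hS⟩ := ((tendsto_order.1 (tendsto_tsum_compl_atTop_zero fun i => ‖c i‖)).2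
    (ε / 2) (by positivity)).exists
  have hC : 0 ≤ ∑' i, ‖c i‖ := tsum_nonneg fun _ => norm_nonneg _
  set δ := ε / 2 / (∑' i, ‖c i‖ + 1)
  have hδ : 0 < δ := by positivity
  obtain ⟨f, hfX, hf⟩ := exists_isPeakFunction hX hsep i₀ S hδ
  calc ‖c i₀‖ ≤ δ * ∑' i, ‖c i‖ + ∑' i : {i // i ∉ S}, ‖c i‖ :=
        hf.norm_apply_le hδ.le hc (hzero f hfX)
    _ ≤ ε / 2 + ε / 2 := by
        gcongr
        rw [div_mul_eq_mul_div, div_le_iff₀ (by positivity)]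
        nlinarith
    _ = 0 + ε := by ring

end PeakFunction

theorem Memℓp.comp_equiv {α β E : Type*} [NormedAddCommGroup E] {p : ℝ≥0∞} {f : α → E}
    (hf : Memℓp f p) (e : β ≃ α) : Memℓp (f ∘ e) p := by
  obtain rfl | rfl | hp := p.trichotomy
  · exact memℓp_zero (hf.finite_dsupport.preimage e.injective.injOn)
  · refine memℓp_infty ?_
    convert hf.bddAbove using 1
    exact e.surjective.range_comp fun a => ‖f a‖
  · exact memℓp_gen ((e.summable_iff (f := fun a => ‖f a‖ ^ p.toReal)).2 (hf.summable hp))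

section Multiplier

variable {ι : Type*} {E : ι → Type*} [∀ i, NormedAddCommGroup (E i)]

def multiplierSubalgebra {𝕜 : Type*} [NormedField 𝕜] [∀ i, NormedSpace 𝕜 (E i)] {p : ℝ≥0∞}
    [Fact (1 ≤ p)] (V : Submodule 𝕜 (lp E p)) : Subalgebra 𝕜 (ι → 𝕜) where
  carrier := {f | ∀ x ∈ V, ∃ y ∈ V, ∀ i, y i = f i • x i}
  mul_mem' {f g} hf hg x hx := by
    obtain ⟨y, hy, hyx⟩ := hg x hx
    obtain ⟨z, hz, hzy⟩ := hf y hy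
    exact ⟨z, hz, fun i => by rw [hzy, hyx, smul_smul]; rfl⟩
  add_mem' {f g} hf hg x hx := by
    obtain ⟨y, hy, hyx⟩ := hf x hx
    obtain ⟨z, hz, hzx⟩ := hg x hx
    exact ⟨y + z, V.add_mem hy hz, fun i => by simp [hyx, hzx, add_smul]⟩
  algebraMap_mem' r x hx := ⟨r • x, V.smul_mem r hx, fun i => by simp⟩

theorem inner_apply_eq_zero_of_mem_orthogonal {𝕜 : Type*} [RCLike 𝕜]
    [∀ i, InnerProductSpace 𝕜 (E i)] {X : Set (ι → 𝕜)} (hX : ∀ χ ∈ X, ∀ i, ‖χ i‖ = 1)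
    (hsep : ∀ i j, i ≠ j → ∃ χ ∈ X, χ i ≠ χ j) {V : Submodule 𝕜 (lp E 2)}
    (hV : Algebra.adjoin 𝕜 X ≤ multiplierSubalgebra V)
    {y v : lp E 2} (hy : y ∈ Vᗮ) (hv : v ∈ V) (i : ι) : inner 𝕜 (y i) (v i) = 0 := by
  suffices (fun i => inner 𝕜 (y i) (v i)) = 0 from congrFun this i
  refine eq_zero_of_forall_mem_adjoin_tsum_mul_eq_zero hX hsep (lp.summable_inner y v)
    fun f hf => ?_
  obtain ⟨u, hu, hfu⟩ := hV hf v hv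
  calc ∑' i, f i * inner 𝕜 (y i) (v i) = inner 𝕜 y u := by
        simp [lp.inner_eq_tsum, hfu, inner_smul_right]
    _ = 0 := (Submodule.mem_orthogonal' V y).1 hy u hu

end Multiplier

theorem exists_isClosed_submodule_iff_forall_apply_mem {ι 𝕜 K : Type*} [RCLike 𝕜]
    [NormedAddCommGroup K] [InnerProductSpace 𝕜 K] [CompleteSpace K]
    {V : Submodule 𝕜 (lp (fun _ : ι => K) 2)}
    (hVclosed : IsClosed (V : Set (lp (fun _ : ι => K) 2)))
    (horth : ∀ y ∈ Vᗮ, ∀ v ∈ V, ∀ i j, inner 𝕜 (y i) (v j) = 0) :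
    ∃ Kt : Submodule 𝕜 K, IsClosed (Kt : Set K) ∧
      ∀ x : lp (fun _ : ι => K) 2, x ∈ V ↔ ∀ i, x i ∈ Kt := by
  refine ⟨⨅ y : Vᗮ, ⨅ i, (𝕜 ∙ (y : lp (fun _ : ι => K) 2) i)ᗮ, ?_,
    fun x => ⟨fun hx => ?_, fun hx => ?_⟩⟩
  · simp only [Submodule.coe_iInf]
    exact isClosed_iInter fun y => isClosed_iInter fun i => Submodule.isClosed_orthogonal _
  · simp only [Submodule.mem_iInf, Submodule.mem_orthogonal_singleton_iff_inner_right]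
    exact fun i y j => horth y y.2 x hx j i
  · simp only [Submodule.mem_iInf, Submodule.mem_orthogonal_singleton_iff_inner_right] at hx
    rw [← hVclosed.submodule_topologicalClosure_eq, ← Submodule.orthogonal_orthogonal_eq_closure,
      Submodule.mem_orthogonal]
    intro y hy
    simp [lp.inner_eq_tsum, fun i => hx i ⟨y, hy⟩ i]

theorem apply_ne_apply_of_apply_sub_ne_one {G M₀ : Type*} [AddGroup G] [MonoidWithZero M₀]
    [IsCancelMulZero M₀] {χ : G → M₀} (hχ : ∀ g g', χ (g + g') = χ g * χ g') {g h : G}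
    (hh : χ h ≠ 0) (hgh : χ (g - h) ≠ 1) : χ g ≠ χ h := by
  intro heq
  have := hχ (g - h) h
  rw [sub_add_cancel, heq] at this
  exact hgh ((mul_eq_right₀ hh).1 this.symm)

theorem stmt11_general {G : Type*} [AddCommGroup G] {K : Type*} [NormedAddCommGroup K]
    [InnerProductSpace ℂ K] [CompleteSpace K]
    (X : Set (G → ℂ))
    (hchar : ∀ χ ∈ X, (∀ g : G, ‖χ g‖ = 1) ∧ ∀ g g' : G, χ (g + g') = χ g * χ g')
    (hsep : ∀ g : G, g ≠ 0 → ∃ χ ∈ X, χ g ≠ 1)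
    (V : Submodule ℂ (lp (fun _ : G => K) 2))
    (hVclosed : IsClosed (V : Set (lp (fun _ : G => K) 2)))
    (htrans : ∀ a : G, ∀ x ∈ V, ∀ y : lp (fun _ : G => K) 2,
      (∀ g : G, y g = x (g - a)) → y ∈ V)
    (hdiag : ∀ χ ∈ X, ∀ x ∈ V, ∀ y : lp (fun _ : G => K) 2,
      (∀ g : G, y g = χ g • x g) → y ∈ V) :
    ∃ Kt : Submodule ℂ K, IsClosed (Kt : Set K) ∧
      ∀ x : lp (fun _ : G => K) 2, x ∈ V ↔ ∀ g : G, x g ∈ Kt := by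
  have hsep' : ∀ g h : G, g ≠ h → ∃ χ ∈ X, χ g ≠ χ h := fun g h hgh => by
    obtain ⟨χ, hχX, hχ⟩ := hsep (g - h) (sub_ne_zero.2 hgh)
    have hχh : χ h ≠ 0 := norm_ne_zero_iff.1 (by simp [(hchar χ hχX).1 h])
    exact ⟨χ, hχX, apply_ne_apply_of_apply_sub_ne_one (hchar χ hχX).2 hχh hχ⟩
  have hV : Algebra.adjoin ℂ X ≤ multiplierSubalgebra V := Algebra.adjoin_le fun χ hχX x hx =>
    ⟨⟨_, (lp.memℓp x).mono' fun g => by simp [norm_smul, (hchar χ hχX).1 g]⟩,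
      hdiag χ hχX x hx _ fun _ => rfl, fun _ => rfl⟩
  refine exists_isClosed_submodule_iff_forall_apply_mem hVclosed fun y hy v hv g h => ?_
  simpa using inner_apply_eq_zero_of_mem_orthogonal (fun χ hχ => (hchar χ hχ).1) hsep' hV hy
    (htrans (g - h) v hv ⟨_, (lp.memℓp v).comp_equiv (Equiv.subRight (g - h))⟩ fun _ => rfl) g

/-- Operator-theoretic content of Theorem 9.1 of the paper: a closed subspace of
`ℓ²(G, K)` invariant under all translations and under the diagonal unitaries given by a
point-separating, conjugation-closed family of characters of `G` is of the form
`{x : x(g) ∈ K̃ for all g}` for a closed subspace `K̃ ⊆ K`. -/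
theorem stmt11 {G : Type*} [AddCommGroup G] {K : Type*} [NormedAddCommGroup K]
    [InnerProductSpace ℂ K] [CompleteSpace K]
    (X : Set (G → ℂ))
    (hchar : ∀ χ ∈ X, (∀ g : G, ‖χ g‖ = 1) ∧ ∀ g g' : G, χ (g + g') = χ g * χ g')
    (hconj : ∀ χ ∈ X, (fun g : G => (starRingEnd ℂ) (χ g)) ∈ X)
    (hsep : ∀ g : G, g ≠ 0 → ∃ χ ∈ X, χ g ≠ 1)
    (V : Submodule ℂ (lp (fun _ : G => K) 2))
    (hVclosed : IsClosed (V : Set (lp (fun _ : G => K) 2)))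
    (htrans : ∀ a : G, ∀ x ∈ V, ∀ y : lp (fun _ : G => K) 2,
      (∀ g : G, y g = x (g - a)) → y ∈ V)
    (hdiag : ∀ χ ∈ X, ∀ x ∈ V, ∀ y : lp (fun _ : G => K) 2,
      (∀ g : G, y g = χ g • x g) → y ∈ V) :
    ∃ Kt : Submodule ℂ K, IsClosed (Kt : Set K) ∧
      ∀ x : lp (fun _ : G => K) 2, x ∈ V ↔ ∀ g : G, x g ∈ Kt :=
  stmt11_general X hchar hsep V hVclosed htrans hdiag
end

section
/- Let G be an additive abelian group and H = ℓ²(G) the Hilbert space of square-summable complex families indexed by G. For a ∈ G let T_a : H → H be the translation unitary (T_a x)(g) = x(g − a). A character of G is a map χ : G → ℂ with |χ(g)| = 1 for all g and χ(g + g') = χ(g)·χ(g'); for a character χ let D_χ : H → H be the diagonal unitary (D_χ x)(g) = χ(g)·x(g). Let X be a set of characters of G that is closed under pointwise complex conjugation and separates points, i.e. for every g ≠ 0 there is χ ∈ X with χ(g) ≠ 1. Then the only closed linear subspaces V ⊆ H with T_a(V) ⊆ V for every a ∈ G and D_χ(V) ⊆ V for every χ ∈ X are V = {0} and V = H. -/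
/-!
Call `f : G → ℂ` a multiplier of `V` when multiplication by `f` maps `V` into itself. Multipliers
form an algebra containing `X`, and because `V` is closed they are also closed under bounded
pointwise limits along any filter (dominated convergence in `ℓ^p`). For `χ ∈ X` the multiplier
`m = (1 + χ / χ g₀) / 2` has `‖m‖ < 1` off the level set `{χ = χ g₀}` (strict convexity), so `mⁿ`
tends to the indicator of that level set; as `X` separates points, finite products of these
indicators tend to the indicator of `{g₀}`. Hence `V` contains the basis vector at `g₀` as soon as
some `x ∈ V` has `x g₀ ≠ 0`; translating it gives every basis vector, and these span a dense
subspace.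
-/

open Filter Topology ENNReal

theorem Complex.norm_one_add_div_two_lt_one {z : ℂ} (hz : ‖z‖ = 1) (h : z ≠ 1) :
    ‖(1 + z) / 2‖ < 1 := by
  have := (norm_midpoint_lt_iff (x := (1 : ℂ)) (y := z) (by simp [hz])).2 h.symm
  rwa [norm_one, Complex.real_smul, Complex.ofReal_div, Complex.ofReal_one, Complex.ofReal_ofNat,
    one_div_mul_eq_div] at this

namespace lp

variable {α 𝕜 : Type*} [NormedField 𝕜] {p : ℝ≥0∞}

local notation "ℓ" => lp (fun _ : α => 𝕜) p

def multipliers (V : Submodule 𝕜 ℓ) : Subalgebra 𝕜 (α → 𝕜) where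
  carrier := {f | ∀ x ∈ V, ∃ y ∈ V, ⇑y = f * ⇑x}
  mul_mem' {f₁ f₂} h₁ h₂ x hx := by
    obtain ⟨y₂, hy₂V, hy₂⟩ := h₂ x hx
    obtain ⟨y₁, hy₁V, hy₁⟩ := h₁ y₂ hy₂V
    exact ⟨y₁, hy₁V, by rw [hy₁, hy₂, mul_assoc]⟩
  add_mem' {f₁ f₂} h₁ h₂ x hx := by
    obtain ⟨y₁, hy₁V, hy₁⟩ := h₁ x hx
    obtain ⟨y₂, hy₂V, hy₂⟩ := h₂ x hx
    exact ⟨y₁ + y₂, V.add_mem hy₁V hy₂V, by rw [coeFn_add, hy₁, hy₂, add_mul]⟩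
  algebraMap_mem' c x hx := ⟨c • x, V.smul_mem c hx, by ext; simp⟩

theorem memℓp_mul_of_norm_le {f : α → 𝕜} {C : ℝ} (hf : ∀ a, ‖f a‖ ≤ C) (x : ℓ) :
    Memℓp (f * ⇑x) p :=
  ((lp.memℓp x).norm.const_mul C).mono fun a => by
    rw [Pi.mul_apply, norm_mul]
    exact mul_le_mul_of_nonneg_right (hf a) (norm_nonneg _)

theorem mem_multipliers_of_norm_le {V : Submodule 𝕜 ℓ} {f : α → 𝕜} {C : ℝ}
    (hf : ∀ a, ‖f a‖ ≤ C) (hV : ∀ x ∈ V, ∀ y : ℓ, (∀ a, y a = f a * x a) → y ∈ V) :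
    f ∈ multipliers V := fun x hx =>
  ⟨⟨_, memℓp_mul_of_norm_le hf x⟩, hV x hx _ fun _ => rfl, rfl⟩

theorem tendsto_zero_of_coeFn_eq_mul [Fact (1 ≤ p)] (hp : p ≠ ∞) {ι : Type*} {l : Filter ι}
    {F : ι → α → 𝕜} {C : ℝ} (hF : ∀ a, Tendsto (F · a) l (𝓝 0)) (hC : ∀ i a, ‖F i a‖ ≤ C)
    (x : ℓ) {z : ι → ℓ} (hz : ∀ i, ⇑(z i) = F i * ⇑x) : Tendsto z l (𝓝 0) := by
  have hp0 : 0 < p.toReal := ENNReal.toReal_pos (zero_lt_one.trans_le Fact.out).ne' hp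
  have hsum : Tendsto (fun i => ‖z i‖ ^ p.toReal) l (𝓝 0) := by
    simp_rw [lp.norm_rpow_eq_tsum hp0, hz, Pi.mul_apply]
    have := tendsto_tsum_of_dominated_convergence
      (f := fun i a => ‖F i a * x a‖ ^ p.toReal) (g := 0)
      (bound := fun a => C ^ p.toReal * ‖x a‖ ^ p.toReal)
      (((lp.memℓp x).summable hp0).mul_left _)
      (fun a => by
        simpa [Real.zero_rpow hp0.ne'] using
          (((hF a).mul_const (x a)).norm.rpow_const (Or.inr hp0.le)))
      (Eventually.of_forall fun i a => by
        rw [Real.norm_of_nonneg (by positivity), norm_mul,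
          Real.mul_rpow (norm_nonneg _) (norm_nonneg _)]
        gcongr
        exact hC i a)
    simpa using this
  rw [tendsto_zero_iff_norm_tendsto_zero]
  simpa [Real.rpow_rpow_inv (norm_nonneg _) hp0.ne', Real.zero_rpow (inv_ne_zero hp0.ne')] using
    hsum.rpow_const (p := p.toReal⁻¹) (Or.inr (inv_nonneg.2 hp0.le))

theorem mem_multipliers_of_tendsto [Fact (1 ≤ p)] (hp : p ≠ ∞) {V : Submodule 𝕜 ℓ}
    (hV : IsClosed (V : Set ℓ)) {ι : Type*} {l : Filter ι} [l.NeBot] {F : ι → α → 𝕜}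
    {f : α → 𝕜} {C : ℝ} (hFV : ∀ i, F i ∈ multipliers V) (hC : ∀ i a, ‖F i a‖ ≤ C)
    (hF : Tendsto F l (𝓝 f)) : f ∈ multipliers V := by
  intro x hx
  choose Y hYV hY using fun i => hFV i x hx
  have hFa : ∀ a, Tendsto (F · a) l (𝓝 (f a)) := tendsto_pi_nhds.1 hF
  have hfC : ∀ a, ‖f a‖ ≤ C := fun a =>
    le_of_tendsto (hFa a).norm (Eventually.of_forall fun i => hC i a)
  let y : ℓ := ⟨f * ⇑x, memℓp_mul_of_norm_le hfC x⟩
  have hYy : Tendsto (fun i => Y i - y) l (𝓝 0) :=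
    tendsto_zero_of_coeFn_eq_mul hp (F := fun i => F i - f) (C := C + C)
      (fun a => by simpa using (hFa a).sub_const (f a))
      (fun i a => (norm_sub_le _ _).trans (add_le_add (hC i a) (hfC a)))
      x (fun i => by rw [coeFn_sub, hY, sub_mul])
  exact ⟨y, hV.mem_of_tendsto (tendsto_sub_nhds_zero_iff.1 hYy) (Eventually.of_forall hYV), rfl⟩

theorem indicator_setOf_eq_one_mem_multipliers [Fact (1 ≤ p)] (hp : p ≠ ∞)
    {V : Submodule 𝕜 ℓ} (hV : IsClosed (V : Set ℓ)) {m : α → 𝕜} (hm : m ∈ multipliers V)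
    (hm1 : ∀ a, m a = 1 ∨ ‖m a‖ < 1) : {a | m a = 1}.indicator 1 ∈ multipliers V := by
  refine mem_multipliers_of_tendsto hp hV (l := atTop) (F := (m ^ ·)) (C := 1)
    (pow_mem hm) (fun n a => ?_) (tendsto_pi_nhds.2 fun a => ?_)
  · rw [Pi.pow_apply, norm_pow]
    exact pow_le_one₀ (norm_nonneg _) ((hm1 a).elim (fun h => by simp [h]) le_of_lt)
  · rcases hm1 a with h | h
    · simp [h]
    · have hne : m a ≠ 1 := fun h' => by simp [h'] at h
      simpa [hne] using tendsto_pow_atTop_nhds_zero_of_norm_lt_one h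

theorem indicator_singleton_mem_multipliers [Fact (1 ≤ p)] (hp : p ≠ ∞)
    {V : Submodule 𝕜 ℓ} (hV : IsClosed (V : Set ℓ)) (a₀ : α)
    (hsep : ∀ a ≠ a₀, ∃ E : Set α, E.indicator 1 ∈ multipliers V ∧ a₀ ∈ E ∧ a ∉ E) :
    ({a₀} : Set α).indicator 1 ∈ multipliers V := by
  have hsep' : ∀ a, ∃ E : Set α, E.indicator 1 ∈ multipliers V ∧ a₀ ∈ E ∧ (a ∈ E → a = a₀) := by
    intro a
    by_cases ha : a = a₀
    · exact ⟨Set.univ, by simp [one_mem], trivial, fun _ => ha⟩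
    · obtain ⟨E, hEV, h₀, haE⟩ := hsep a ha
      exact ⟨E, hEV, h₀, fun h => absurd h haE⟩
  choose E hEV hE₀ hE using hsep'
  refine mem_multipliers_of_tendsto hp hV (l := atTop)
    (F := fun s : Finset α => ∏ a ∈ s, (E a).indicator 1) (C := 1)
    (fun s => prod_mem fun a _ => hEV a) (fun s b => ?_) (tendsto_pi_nhds.2 fun b => ?_)
  · rw [Finset.prod_apply, norm_prod]
    refine Finset.prod_le_one (fun _ _ => norm_nonneg _) fun a _ => ?_
    by_cases hb : b ∈ E a <;> simp [hb]
  · by_cases hb : b = a₀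
    · subst hb
      simp [Finset.prod_apply, hE₀]
    · have hbE : b ∉ E b := fun h => hb (hE b h)
      have hzero : ∀ᶠ s in atTop, (∏ a ∈ s, (E a).indicator (1 : α → 𝕜)) b = 0 :=
        (eventually_ge_atTop {b}).mono fun s hs => by
          rw [Finset.prod_apply, Finset.prod_eq_zero (Finset.singleton_subset_iff.1 hs)]
          simp [hbE]
      rw [Set.indicator_of_notMem (show b ∉ ({a₀} : Set α) from hb)]
      exact tendsto_const_nhds.congr' (hzero.mono fun s hs => hs.symm)

theorem single_mem_of_indicator_singleton_mem_multipliers [DecidableEq α]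
    {V : Submodule 𝕜 ℓ} {a : α} (ha : ({a} : Set α).indicator 1 ∈ multipliers V) {x : ℓ}
    (hx : x ∈ V) : lp.single p a (x a) ∈ V := by
  obtain ⟨y, hyV, hy⟩ := ha x hx
  convert hyV
  ext b
  by_cases hb : b = a
  · subst hb; simp [hy]
  · simp [hy, hb]

theorem eq_top_of_forall_single_mem [Fact (1 ≤ p)] (hp : p ≠ ∞) [DecidableEq α]
    {V : Submodule 𝕜 ℓ} (hV : IsClosed (V : Set ℓ)) (h : ∀ a c, lp.single p a c ∈ V) :
    V = ⊤ :=
  V.eq_top_iff'.2 fun z => hV.mem_of_tendsto (lp.hasSum_single hp z)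
    (Eventually.of_forall fun _ => sum_mem fun a _ => h a (z a))

theorem single_mem_of_translation_invariant [AddCommGroup α] [DecidableEq α]
    {V : Submodule 𝕜 ℓ} (hV : ∀ a : α, ∀ x ∈ V, ∀ y : ℓ, (∀ b, y b = x (b - a)) → y ∈ V)
    {a₀ : α} {c : 𝕜} (hc : c ≠ 0) (h₀ : lp.single p a₀ c ∈ V) (a : α) (d : 𝕜) :
    lp.single p a d ∈ V := by
  have hd : lp.single p a₀ d ∈ V := by
    convert V.smul_mem (d * c⁻¹) h₀ using 1
    rw [← lp.single_smul, smul_eq_mul, inv_mul_cancel_right₀ hc]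
  refine hV (a - a₀) _ hd _ fun b => ?_
  simp [Pi.single_apply, sub_eq_iff_eq_add]

theorem indicator_setOf_eq_apply_mem_multipliers [Fact (1 ≤ p)] (hp : p ≠ ∞)
    {V : Submodule ℂ (lp (fun _ : α => ℂ) p)} (hV : IsClosed (V : Set (lp (fun _ : α => ℂ) p)))
    {χ : α → ℂ} (hχ : χ ∈ multipliers V) (hχ1 : ∀ a, ‖χ a‖ = 1) (a₀ : α) :
    {a | χ a = χ a₀}.indicator 1 ∈ multipliers V := by
  have hχ₀ : χ a₀ ≠ 0 := norm_ne_zero_iff.1 (by simp [hχ1])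
  let m : α → ℂ := (2 : ℂ)⁻¹ • (1 + (χ a₀)⁻¹ • χ)
  have hm : ∀ a, m a = (1 + χ a / χ a₀) / 2 := fun a => by simp [m]; ring
  have hm_eq : ∀ a, m a = 1 ↔ χ a = χ a₀ := fun a => by
    rw [hm, div_eq_one_iff_eq two_ne_zero, ← eq_sub_iff_add_eq', div_eq_iff hχ₀]
    norm_num
  rw [← Set.ext hm_eq]
  refine indicator_setOf_eq_one_mem_multipliers hp hV
    (Subalgebra.smul_mem _ (add_mem (one_mem _) (Subalgebra.smul_mem _ hχ _)) _) fun a => ?_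
  by_cases h : χ a = χ a₀
  · exact Or.inl ((hm_eq a).2 h)
  · refine Or.inr ((hm a).symm ▸ Complex.norm_one_add_div_two_lt_one (by simp [hχ1]) ?_)
    rwa [ne_eq, div_eq_one_iff_eq hχ₀]

end lp

theorem stmt12_general {G : Type*} [AddCommGroup G]
    (X : Set (G → ℂ))
    (hchar : ∀ χ ∈ X, (∀ g : G, ‖χ g‖ = 1) ∧ ∀ g g' : G, χ (g + g') = χ g * χ g')
    (hsep : ∀ g : G, g ≠ 0 → ∃ χ ∈ X, χ g ≠ 1)
    (V : Submodule ℂ (lp (fun _ : G => ℂ) 2))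
    (hVclosed : IsClosed (V : Set (lp (fun _ : G => ℂ) 2)))
    (htrans : ∀ a : G, ∀ x ∈ V, ∀ y : lp (fun _ : G => ℂ) 2,
      (∀ g : G, y g = x (g - a)) → y ∈ V)
    (hdiag : ∀ χ ∈ X, ∀ x ∈ V, ∀ y : lp (fun _ : G => ℂ) 2,
      (∀ g : G, y g = χ g * x g) → y ∈ V) :
    V = ⊥ ∨ V = ⊤ := by
  classical
  have h2 : (2 : ℝ≥0∞) ≠ ∞ := ENNReal.ofNat_ne_top
  refine or_iff_not_imp_left.2 fun hV => ?_
  obtain ⟨x, hxV, hx⟩ := (Submodule.ne_bot_iff V).1 hV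
  obtain ⟨g₀, hg₀⟩ : ∃ g₀, x g₀ ≠ 0 := by
    by_contra! h
    exact hx (lp.ext (funext h))
  have hδ : ({g₀} : Set G).indicator 1 ∈ lp.multipliers V := by
    refine lp.indicator_singleton_mem_multipliers h2 hVclosed g₀ fun g hg => ?_
    obtain ⟨χ, hχX, hχ⟩ := hsep (g - g₀) (sub_ne_zero.2 hg)
    obtain ⟨hχ1, hχmul⟩ := hchar χ hχX
    refine ⟨_, lp.indicator_setOf_eq_apply_mem_multipliers h2 hVclosed
      (lp.mem_multipliers_of_norm_le (fun g => (hχ1 g).le) (hdiag χ hχX)) hχ1 g₀, rfl, ?_⟩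
    intro h
    have hχ₀ : χ g₀ ≠ 0 := norm_ne_zero_iff.1 (by simp [hχ1])
    refine hχ ?_
    rw [← mul_eq_right₀ hχ₀, ← hχmul, sub_add_cancel]
    exact h
  exact lp.eq_top_of_forall_single_mem h2 hVclosed
    (lp.single_mem_of_translation_invariant htrans hg₀
      (lp.single_mem_of_indicator_singleton_mem_multipliers hδ hxV))

/-- Final Corollary of the paper (irreducibility): in `ℓ²(G)`, the only closed subspaces
invariant under all translations and under the diagonal unitaries given by a
point-separating, conjugation-closed family of characters of `G` are `{0}` and the whole
space. -/
theorem stmt12 {G : Type*} [AddCommGroup G]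
    (X : Set (G → ℂ))
    (hchar : ∀ χ ∈ X, (∀ g : G, ‖χ g‖ = 1) ∧ ∀ g g' : G, χ (g + g') = χ g * χ g')
    (hconj : ∀ χ ∈ X, (fun g : G => (starRingEnd ℂ) (χ g)) ∈ X)
    (hsep : ∀ g : G, g ≠ 0 → ∃ χ ∈ X, χ g ≠ 1)
    (V : Submodule ℂ (lp (fun _ : G => ℂ) 2))
    (hVclosed : IsClosed (V : Set (lp (fun _ : G => ℂ) 2)))
    (htrans : ∀ a : G, ∀ x ∈ V, ∀ y : lp (fun _ : G => ℂ) 2,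
      (∀ g : G, y g = x (g - a)) → y ∈ V)
    (hdiag : ∀ χ ∈ X, ∀ x ∈ V, ∀ y : lp (fun _ : G => ℂ) 2,
      (∀ g : G, y g = χ g * x g) → y ∈ V) :
    V = ⊥ ∨ V = ⊤ :=
  stmt12_general X hchar hsep V hVclosed htrans hdiag
end
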